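/- Let ε ∈ (0,1), β ∈ (0,1) and let d ≥ 1 be an integer. If N is a natural number satisfying N ≥ (e/(ε(e−1)))·(ln(1/β) + d − 1), where e is Euler's number, then the binomial tail satisfies ∑_{i=0}^{d−1} (N choose i) ε^i (1−ε)^{N−i} ≤ β. -/

import Mathlib

/-!
Write `c = ε (1 - e⁻¹)`. For `i < d` we have `ε^i ≤ e^(d-1) (ε/e)^i`, so by the binomial theorem the
tail is at most `e^(d-1) (ε/e + 1 - ε)^N = e^(d-1) (1 - c)^N ≤ exp (d - 1 - c N)`, and the
hypothesis on `N` says exactly `c N ≥ log (1/β) + d - 1`.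
-/

open Finset Real

theorem sum_range_choose_mul_pow_le_add_pow {x y : ℝ} (hx : 0 ≤ x) (hy : 0 ≤ y) (d N : ℕ) :
    ∑ i ∈ range d, (N.choose i : ℝ) * x ^ i * y ^ (N - i) ≤ (x + y) ^ N := by
  have hvanish : ∑ i ∈ range (min d (N + 1)), (N.choose i : ℝ) * x ^ i * y ^ (N - i)
      = ∑ i ∈ range d, (N.choose i : ℝ) * x ^ i * y ^ (N - i) := by
    refine sum_subset (range_subset_range.mpr (min_le_left _ _)) fun i hid hiN => ?_
    rw [Nat.choose_eq_zero_of_lt (by simp at hid hiN; omega), Nat.cast_zero, zero_mul, zero_mul]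
  rw [← hvanish, add_pow]
  calc ∑ i ∈ range (min d (N + 1)), (N.choose i : ℝ) * x ^ i * y ^ (N - i)
      ≤ ∑ i ∈ range (N + 1), (N.choose i : ℝ) * x ^ i * y ^ (N - i) :=
        sum_le_sum_of_subset_of_nonneg (range_subset_range.mpr (min_le_right _ _))
          fun _ _ _ => by positivity
    _ = ∑ i ∈ range (N + 1), x ^ i * y ^ (N - i) * (N.choose i : ℝ) :=
        sum_congr rfl fun _ _ => by ring

theorem sum_range_choose_mul_pow_le_pow_mul_add_pow {p q t : ℝ} (hp : 0 ≤ p) (hq : 0 ≤ q)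
    (ht : 1 ≤ t) (d N : ℕ) :
    ∑ i ∈ range d, (N.choose i : ℝ) * p ^ i * q ^ (N - i) ≤ t ^ (d - 1) * (p / t + q) ^ N := by
  have ht0 : 0 < t := by linarith
  calc ∑ i ∈ range d, (N.choose i : ℝ) * p ^ i * q ^ (N - i)
      ≤ ∑ i ∈ range d, t ^ (d - 1) * ((N.choose i : ℝ) * (p / t) ^ i * q ^ (N - i)) := by
        refine sum_le_sum fun i hi => ?_
        have hti : t ^ i ≤ t ^ (d - 1) :=
          pow_le_pow_right₀ ht (Nat.le_sub_one_of_lt (mem_range.mp hi))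
        calc (N.choose i : ℝ) * p ^ i * q ^ (N - i)
            = t ^ i * ((N.choose i : ℝ) * (p / t) ^ i * q ^ (N - i)) := by
              rw [div_pow]; field_simp
          _ ≤ t ^ (d - 1) * ((N.choose i : ℝ) * (p / t) ^ i * q ^ (N - i)) := by gcongr
    _ ≤ t ^ (d - 1) * (p / t + q) ^ N := by
        rw [← mul_sum]
        gcongr
        exact sum_range_choose_mul_pow_le_add_pow (by positivity) hq d N

theorem sum_range_choose_mul_pow_le_exp {ε : ℝ} (hε0 : 0 ≤ ε) (hε1 : ε ≤ 1) {d : ℕ} (hd : 1 ≤ d)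
    (N : ℕ) :
    ∑ i ∈ range d, (N.choose i : ℝ) * ε ^ i * (1 - ε) ^ (N - i)
      ≤ exp ((d - 1) - ε * (1 - (exp 1)⁻¹) * N) := by
  have hbase : ε / exp 1 + (1 - ε) = 1 - ε * (1 - (exp 1)⁻¹) := by ring
  have hc : ε * (1 - (exp 1)⁻¹) ≤ 1 := by
    have : 0 < (exp 1)⁻¹ := by positivity
    nlinarith
  calc ∑ i ∈ range d, (N.choose i : ℝ) * ε ^ i * (1 - ε) ^ (N - i)
      ≤ exp 1 ^ (d - 1) * (ε / exp 1 + (1 - ε)) ^ N :=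
        sum_range_choose_mul_pow_le_pow_mul_add_pow hε0 (by linarith) (one_le_exp zero_le_one) d N
    _ ≤ exp 1 ^ (d - 1) * exp (-(ε * (1 - (exp 1)⁻¹))) ^ N := by
        rw [hbase]
        gcongr
        exact one_sub_le_exp_neg _
    _ = exp ((d - 1) - ε * (1 - (exp 1)⁻¹) * N) := by
        rw [← exp_nat_mul, ← exp_nat_mul, ← exp_add, Nat.cast_sub hd]
        push_cast
        ring_nf

/-- Explicit sufficient sample-size bound for the scenario-with-certificates
approach: if `N ≥ (e/(ε(e−1)))·(ln(1/β) + d − 1)` then the binomial tail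
`∑_{i=0}^{d−1} (N choose i) ε^i (1−ε)^{N−i}` is at most `β`. -/
theorem scenario_sample_size_bound
    (ε β : ℝ) (hε : ε ∈ Set.Ioo (0 : ℝ) 1) (hβ : β ∈ Set.Ioo (0 : ℝ) 1)
    (d : ℕ) (hd : 1 ≤ d) (N : ℕ)
    (hN : (Real.exp 1 / (ε * (Real.exp 1 - 1))) * (Real.log (1 / β) + d - 1) ≤ N) :
    ∑ i ∈ Finset.range d, (N.choose i : ℝ) * ε ^ i * (1 - ε) ^ (N - i) ≤ β := by
  obtain ⟨hε0, hε1⟩ := hε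
  set c := ε * (1 - (exp 1)⁻¹)
  have hc : 0 < c := mul_pos hε0 (sub_pos.mpr (inv_lt_one_of_one_lt₀ (one_lt_exp_iff.mpr one_pos)))
  have hcN : log (1 / β) + d - 1 ≤ c * N := by
    have hinv : exp 1 / (ε * (exp 1 - 1)) = c⁻¹ := by
      simp only [c]
      field_simp
    rwa [hinv, inv_mul_le_iff₀ hc] at hN
  calc ∑ i ∈ range d, (N.choose i : ℝ) * ε ^ i * (1 - ε) ^ (N - i)
      ≤ exp ((d - 1) - c * N) := sum_range_choose_mul_pow_le_exp hε0.le hε1.le hd N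
    _ ≤ exp (log β) := exp_le_exp.mpr (by rw [one_div, log_inv] at hcN; linarith)
    _ = β := exp_log hβ.1
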